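/- For any n×n complex matrix A, the permanent satisfies Ryser's formula: perm(A) = (−1)^n · Σ_{S ⊆ {1,…,n}} (−1)^{|S|} · Π_{i=1}^{n} Σ_{j∈S} a_{i,j}. -/

import Mathlib

open Finset

/-- The permanent of an `n × n` matrix. -/
noncomputable def perma {n : ℕ} (A : Matrix (Fin n) (Fin n) ℂ) : ℂ :=
  ∑ σ : Equiv.Perm (Fin n), ∏ i, A i (σ i)

/-!
Expanding `∏ i, ∑ j ∈ S, A i j` gives the sum of `∏ i, A i (f i)` over the maps `f` with image
in `S`. Exchanging the sums, each `f` is weighted by the alternating sum of `(-1) ^ #S` over the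
`S ⊇ image f`, which is `(-1) ^ n` if `f` is onto and `0` otherwise; the onto self-maps of a
finite set are exactly the permutations.
-/

section

variable {α R : Type*} [DecidableEq α] [CommRing R]

theorem sum_powerset_neg_one_pow_card_eq_ite (T : Finset α) :
    ∑ U ∈ T.powerset, (-1 : R) ^ #U = if T = ∅ then 1 else 0 := by
  have := congrArg (Int.cast : ℤ → R) (sum_powerset_neg_one_pow_card (x := T))
  push_cast at this
  simpa [apply_ite (Int.cast : ℤ → R)] using this

variable [Fintype α]

theorem neg_one_pow_card_eq_mul_neg_one_pow_card_compl (S : Finset α) :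
    (-1 : R) ^ #S = (-1) ^ Fintype.card α * (-1) ^ #Sᶜ := by
  rw [← card_add_card_compl S, pow_add, mul_assoc, ← mul_pow, neg_one_mul, neg_neg, one_pow,
    mul_one]

theorem sum_superset_neg_one_pow_card (T : Finset α) :
    ∑ S with T ⊆ S, (-1 : R) ^ #S = if T = univ then (-1) ^ Fintype.card α else 0 := by
  have compl_powerset : ∑ S with T ⊆ S, (-1 : R) ^ #Sᶜ = ∑ U ∈ Tᶜ.powerset, (-1) ^ #U :=
    sum_nbij' (·ᶜ) (·ᶜ) (by simp) (by simp [subset_compl_comm]) (by simp) (by simp) (by simp)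
  rw [sum_congr rfl fun S _ ↦ neg_one_pow_card_eq_mul_neg_one_pow_card_compl S, ← mul_sum,
    compl_powerset, sum_powerset_neg_one_pow_card_eq_ite]
  simp [compl_eq_empty_iff]

end

theorem sum_neg_one_pow_card_mul_prod_sum {ι κ R : Type*} [Fintype ι] [DecidableEq ι] [Fintype κ]
    [DecidableEq κ] [CommRing R] (A : ι → κ → R) :
    ∑ S : Finset κ, (-1 : R) ^ #S * ∏ i, ∑ j ∈ S, A i j
      = (-1) ^ Fintype.card κ * ∑ f : ι → κ with f.Surjective, ∏ i, A i (f i) := by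
  have mem_piFinset_iff_image_subset (S : Finset κ) (f : ι → κ) :
      f ∈ Fintype.piFinset (fun _ ↦ S) ↔ univ.image f ⊆ S := by
    simp [Fintype.mem_piFinset, image_subset_iff]
  have image_eq_univ_iff (f : ι → κ) : univ.image f = univ ↔ f.Surjective := by
    simp [eq_univ_iff_forall, Function.Surjective]
  calc ∑ S : Finset κ, (-1 : R) ^ #S * ∏ i, ∑ j ∈ S, A i j
      = ∑ S : Finset κ, ∑ f ∈ Fintype.piFinset (fun _ ↦ S), (-1) ^ #S * ∏ i, A i (f i) := by
        simp_rw [prod_univ_sum, mul_sum]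
    _ = ∑ f : ι → κ, (∑ S with univ.image f ⊆ S, (-1) ^ #S) * ∏ i, A i (f i) := by
        simp_rw [sum_mul]
        exact sum_comm' fun S f ↦ by simp [mem_piFinset_iff_image_subset]
    _ = (-1) ^ Fintype.card κ * ∑ f : ι → κ with f.Surjective, ∏ i, A i (f i) := by
        simp_rw [sum_superset_neg_one_pow_card, image_eq_univ_iff, mul_sum, sum_filter, ite_mul,
          zero_mul]

theorem sum_filter_surjective_eq_sum_perm {ι M : Type*} [Fintype ι] [DecidableEq ι]
    [AddCommMonoid M] (g : (ι → ι) → M) :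
    ∑ f : ι → ι with f.Surjective, g f = ∑ σ : Equiv.Perm ι, g σ := by
  refine (sum_nbij (fun σ : Equiv.Perm ι ↦ ⇑σ) (fun σ _ ↦ by simpa using σ.surjective)
    (fun σ _ τ _ h ↦ DFunLike.coe_injective h) (fun f hf ↦ ?_) (fun _ _ ↦ rfl)).symm
  have hsurj : f.Surjective := by simpa using hf
  exact ⟨Equiv.ofBijective f ⟨Finite.injective_iff_surjective.mpr hsurj, hsurj⟩, by simp, rfl⟩

theorem ryser_formula {n : ℕ} (A : Matrix (Fin n) (Fin n) ℂ) :
    perma A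
      = (-1 : ℂ) ^ n * ∑ S : Finset (Fin n), (-1 : ℂ) ^ S.card * ∏ i, ∑ j ∈ S, A i j := by
  rw [sum_neg_one_pow_card_mul_prod_sum (A := A), sum_filter_surjective_eq_sum_perm,
    Fintype.card_fin, ← mul_assoc, ← pow_add, Even.neg_one_pow ⟨n, rfl⟩, one_mul, perma]
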